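/- arXiv:0801.3835 — 8 statements merged into one kernel-verified Lean document; each statement's English description precedes it below -/
import Mathlib

section
/- Let x₁,…,x_n be real numbers with Σᵢ xᵢ = 0, and suppose x ∈ ℝ satisfies xᵢ ≤ x for every i. Then Σᵢ xᵢ² ≤ n(n−1)x². -/
/-- Lemma 7.5. If `x₁,…,x_n` are real numbers with
`Σᵢ xᵢ = 0` and `xᵢ ≤ x` for every `i`, then `Σᵢ xᵢ² ≤ n(n−1)x²`. -/
theorem sum_sq_le_of_sum_eq_zero (n : ℕ) (x : Fin n → ℝ) (c : ℝ)
    (hsum : ∑ i, x i = 0) (hle : ∀ i, x i ≤ c) :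
    ∑ i, (x i) ^ 2 ≤ (n : ℝ) * ((n : ℝ) - 1) * c ^ 2 := by
  rcases Nat.eq_zero_or_pos n with h0 | hn
  · subst h0; simp
  have hlow : ∀ i, -(((n : ℝ) - 1) * c) ≤ x i := by
    intro i
    have he : x i + ∑ j ∈ Finset.univ.erase i, x j = 0 := by
      rw [Finset.add_sum_erase _ x (Finset.mem_univ i)]; exact hsum
    have hb : ∑ j ∈ Finset.univ.erase i, x j ≤ ((n : ℝ) - 1) * c := by
      have h1 := Finset.sum_le_card_nsmul (Finset.univ.erase i) x c
        (fun j _ => hle j)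
      have hc : (Finset.univ.erase i).card = n - 1 := by
        simp [Finset.card_erase_of_mem]
      rw [hc, nsmul_eq_mul, Nat.cast_sub hn] at h1
      simpa using h1
    linarith
  have key : ∀ i, x i ^ 2 ≤ ((n : ℝ) - 1) * c ^ 2 - ((n : ℝ) - 2) * c * x i := by
    intro i
    nlinarith [hle i, hlow i, sq_nonneg (x i)]
  calc ∑ i, x i ^ 2
      ≤ ∑ i : Fin n, (((n : ℝ) - 1) * c ^ 2 - ((n : ℝ) - 2) * c * x i) :=
        Finset.sum_le_sum (fun i _ => key i)
    _ = (n : ℝ) * (((n : ℝ) - 1) * c ^ 2) - ((n : ℝ) - 2) * c * ∑ i, x i := by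
        rw [Finset.sum_sub_distrib, Finset.sum_const, ← Finset.mul_sum]
        simp [nsmul_eq_mul]
    _ ≤ (n : ℝ) * ((n : ℝ) - 1) * c ^ 2 := by rw [hsum]; ring_nf; rfl
end

section
/- Let D = (I,u) be an Arakelov divisor of degree 0 on a number field F of degree n. Then every nonzero f ∈ I satisfies ‖f‖_D ≥ √n, and there exists a nonzero f ∈ I with ‖f‖_D ≤ √n·(2/π)^{r₂/n}·|Δ_F|^{1/(2n)}. -/
/-!
For `0 ≠ f ∈ I` the principal ideal `(f)` lies in `I`, so `|N(f)| ≥ N(I)` and hence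
`∏_w (u_w |f|_w)^{m_w} = N(u) |N(f)| ≥ 1`; weighted AM–GM turns this into
`∑_w m_w (u_w |f|_w)² ≥ n`.

For the upper bound apply Minkowski's theorem to the compact box `{x : |x_w| ≤ c / u_w}`. Its volume
`2^{r₁} π^{r₂} cⁿ / N(u)` equals `2ⁿ` times the covolume `2^{-r₂} N(I) √|Δ|` of `I` exactly when
`c = (2/π)^{r₂/n} |Δ|^{1/(2n)}`, so some `0 ≠ f ∈ I` has `u_w |f|_w ≤ c` at every place `w`.
-/

open NumberField Module FractionalIdeal
open scoped nonZeroDivisors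

namespace FractionalIdeal

variable {R : Type*} [CommRing R] [IsDedekindDomain R] [Module.Free ℤ R] [Module.Finite ℤ R]
  {K : Type*} [Field K] [Algebra R K] [IsFractionRing R K]

theorem one_le_absNorm_of_le_one {J : FractionalIdeal R⁰ K} (hJ : J ≤ 1) (hJ0 : J ≠ 0) :
    1 ≤ absNorm J := by
  obtain ⟨J₀, rfl⟩ := le_one_iff_exists_coeIdeal.mp hJ
  rw [coeIdeal_absNorm, Nat.one_le_cast, Nat.one_le_iff_ne_zero, Ne, Ideal.absNorm_eq_zero_iff]
  simpa using hJ0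

theorem absNorm_le_absNorm_of_le {I J : FractionalIdeal R⁰ K} (hJ : J ≠ 0) (hJI : J ≤ I) :
    absNorm I ≤ absNorm J := by
  have hI : I ≠ 0 := ne_bot_of_le_ne_bot hJ hJI
  have hle : I⁻¹ * J ≤ 1 := by
    calc I⁻¹ * J ≤ I⁻¹ * I := by gcongr
    _ = 1 := inv_mul_cancel₀ hI
  have h1 := one_le_absNorm_of_le_one hle (mul_ne_zero (inv_ne_zero hI) hJ)
  calc absNorm I = absNorm I * 1 := (mul_one _).symm
  _ ≤ absNorm I * absNorm (I⁻¹ * J) := by gcongr; exact absNorm_nonneg I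
  _ = absNorm J := by rw [← map_mul, ← mul_assoc, mul_inv_cancel₀ hI, one_mul]

end FractionalIdeal

theorem NumberField.absNorm_le_abs_norm_of_mem {K : Type*} [Field K] [NumberField K]
    {I : FractionalIdeal (𝓞 K)⁰ K} {x : K} (hx : x ∈ I) (hx0 : x ≠ 0) :
    absNorm I ≤ |Algebra.norm ℚ x| := by
  rw [← absNorm_span_singleton (𝓞 K)]
  exact absNorm_le_absNorm_of_le (by rwa [ne_eq, spanSingleton_eq_zero_iff])
    (spanSingleton_le_iff_mem.mpr hx)

theorem Real.sum_le_sum_mul_of_one_le_prod_pow {ι : Type*} (s : Finset ι) (m : ι → ℕ) {y : ι → ℝ}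
    (hy : ∀ i ∈ s, 0 ≤ y i) (h : 1 ≤ ∏ i ∈ s, y i ^ m i) :
    (∑ i ∈ s, (m i : ℝ)) ≤ ∑ i ∈ s, m i * y i := by
  rcases (Finset.sum_nonneg fun i _ => Nat.cast_nonneg (m i) : (0:ℝ) ≤ ∑ i ∈ s, (m i : ℝ)).eq_or_lt
    with hm | hm
  · rw [← hm]; exact Finset.sum_nonneg fun i hi => mul_nonneg (Nat.cast_nonneg _) (hy i hi)
  have amgm := Real.geom_mean_le_arith_mean s (fun i => (m i : ℝ)) y
    (fun _ _ => Nat.cast_nonneg _) hm hy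
  simp only [Real.rpow_natCast] at amgm
  rw [← one_le_div hm]
  exact (Real.one_le_rpow h (inv_nonneg.mpr hm.le)).trans amgm

namespace NumberField.mixedEmbedding

open InfinitePlace MeasureTheory Metric
open scoped NNReal ENNReal

variable (K : Type*) [Field K] (f : InfinitePlace K → ℝ≥0)

noncomputable abbrev convexBodyLE : Set (mixedSpace K) :=
  (Set.univ.pi fun w : { w : InfinitePlace K // IsReal w } => closedBall 0 (f w)) ×ˢ
  (Set.univ.pi fun w : { w : InfinitePlace K // IsComplex w } => closedBall 0 (f w))

theorem convexBodyLE_mem {x : K} :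
    mixedEmbedding K x ∈ convexBodyLE K f ↔ ∀ w : InfinitePlace K, w x ≤ f w := by
  simp_rw [convexBodyLE, mixedEmbedding, RingHom.prod_apply, Set.mem_prod, Set.mem_pi,
    Set.mem_univ, forall_true_left, mem_closedBall_zero_iff, RingHom.pi_apply, ← Complex.norm_real,
    embedding_of_isReal_apply, Subtype.forall, ← forall₂_or_left, ← not_isReal_iff_isComplex, em,
    forall_true_left, norm_embedding_eq]

theorem convexBodyLE_neg_mem (x : mixedSpace K) (hx : x ∈ convexBodyLE K f) :
    -x ∈ convexBodyLE K f := by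
  simpa only [Set.mem_prod, Prod.fst_neg, Prod.snd_neg, Set.mem_pi, Pi.neg_apply,
    mem_closedBall_zero_iff, norm_neg] using hx

theorem convexBodyLE_convex : Convex ℝ (convexBodyLE K f) :=
  (convex_pi fun _ _ => convex_closedBall _ _).prod (convex_pi fun _ _ => convex_closedBall _ _)

theorem convexBodyLE_compact : IsCompact (convexBodyLE K f) :=
  (isCompact_univ_pi fun _ => isCompact_closedBall _ _).prod
    (isCompact_univ_pi fun _ => isCompact_closedBall _ _)

theorem convexBodyLT_subset_convexBodyLE : convexBodyLT K f ⊆ convexBodyLE K f :=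
  Set.prod_mono (Set.pi_mono fun _ _ => ball_subset_closedBall)
    (Set.pi_mono fun _ _ => ball_subset_closedBall)

-- Unlike `exists_ne_zero_mem_ideal_lt`, this allows equality in the volume bound.
open scoped Classical in
theorem exists_ne_zero_mem_ideal_le [NumberField K] (I : (FractionalIdeal (𝓞 K)⁰ K)ˣ)
    (h : minkowskiBound K I ≤ volume (convexBodyLE K f)) :
    ∃ a ∈ (I : FractionalIdeal (𝓞 K)⁰ K), a ≠ 0 ∧ ∀ w : InfinitePlace K, w a ≤ f w := by
  have h_fund := ZSpan.isAddFundamentalDomain' (fractionalIdealLatticeBasis K I) volume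
  have : Countable (Submodule.span ℤ
      (Set.range (fractionalIdealLatticeBasis K I))).toAddSubgroup := by
    change Countable (Submodule.span ℤ (Set.range (fractionalIdealLatticeBasis K I)))
    infer_instance
  obtain ⟨⟨x, hx⟩, h_nz, h_mem⟩ := exists_ne_zero_mem_lattice_of_measure_mul_two_pow_le_measure
    h_fund (convexBodyLE_neg_mem K f) (convexBodyLE_convex K f) (convexBodyLE_compact K f) h
  rw [Submodule.mem_toAddSubgroup, mem_span_fractionalIdealLatticeBasis] at hx
  obtain ⟨a, ha, rfl⟩ := hx
  exact ⟨a, ha, by simpa using h_nz, (convexBodyLE_mem K f).mp h_mem⟩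

theorem minkowskiBound_toReal [NumberField K] (I : (FractionalIdeal (𝓞 K)⁰ K)ˣ) :
    (minkowskiBound K I).toReal =
      2 ^ (nrRealPlaces K + nrComplexPlaces K) * absNorm (I : FractionalIdeal (𝓞 K)⁰ K) *
        √|(discr K : ℝ)| := by
  classical
  simp_rw [minkowskiBound, volume_fundamentalDomain_fractionalIdealLatticeBasis,
    volume_fundamentalDomain_latticeBasis, mixedEmbedding.finrank, ← card_add_two_mul_card_eq_rank,
    ENNReal.toReal_mul, ENNReal.toReal_pow, ENNReal.toReal_inv, ENNReal.toReal_ofNat,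
    ENNReal.coe_toReal, Real.coe_sqrt, coe_nnnorm, Int.norm_eq_abs,
    ENNReal.toReal_ofReal (Rat.cast_nonneg.mpr (absNorm_nonneg _))]
  rw [two_mul, ← add_assoc, pow_add _ (_ + _), inv_pow]
  field_simp

open scoped Classical in
theorem volume_convexBodyLT_toReal [NumberField K] :
    (volume (convexBodyLT K f)).toReal =
      2 ^ nrRealPlaces K * Real.pi ^ nrComplexPlaces K * ∏ w, (f w : ℝ) ^ mult w := by
  simp [convexBodyLT_volume, convexBodyLTFactor]

variable {K} [NumberField K]

theorem exists_ne_zero_mem_ideal_le_of_le_prod (I : (FractionalIdeal (𝓞 K)⁰ K)ˣ)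
    {f : InfinitePlace K → ℝ≥0}
    (h : (2 / Real.pi) ^ nrComplexPlaces K * √|(discr K : ℝ)| *
      absNorm (I : FractionalIdeal (𝓞 K)⁰ K) ≤ ∏ w, (f w : ℝ) ^ mult w) :
    ∃ a ∈ (I : FractionalIdeal (𝓞 K)⁰ K), a ≠ 0 ∧ ∀ w : InfinitePlace K, w a ≤ f w := by
  classical
  refine exists_ne_zero_mem_ideal_le K f I (le_trans ?_
    (measure_mono (convexBodyLT_subset_convexBodyLE K f)))
  rw [← ENNReal.toReal_le_toReal (minkowskiBound_lt_top K I).ne (by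
    rw [convexBodyLT_volume]; exact ENNReal.mul_ne_top ENNReal.coe_ne_top ENNReal.coe_ne_top),
    minkowskiBound_toReal, volume_convexBodyLT_toReal]
  calc (2 : ℝ) ^ (nrRealPlaces K + nrComplexPlaces K) * absNorm (I : FractionalIdeal (𝓞 K)⁰ K) *
        √|(discr K : ℝ)|
      = 2 ^ nrRealPlaces K * Real.pi ^ nrComplexPlaces K * ((2 / Real.pi) ^ nrComplexPlaces K *
          √|(discr K : ℝ)| * absNorm (I : FractionalIdeal (𝓞 K)⁰ K)) := by
        rw [div_pow, pow_add]
        field_simp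
    _ ≤ _ := by gcongr

theorem exists_ne_zero_mem_ideal_forall_mul_le (I : (FractionalIdeal (𝓞 K)⁰ K)ˣ)
    {u : InfinitePlace K → ℝ} (hu : ∀ w, 0 < u w) {c : ℝ} (hc : 0 ≤ c)
    (h : (2 / Real.pi) ^ nrComplexPlaces K * √|(discr K : ℝ)| *
      absNorm (I : FractionalIdeal (𝓞 K)⁰ K) * ∏ w, u w ^ mult w ≤ c ^ finrank ℚ K) :
    ∃ a ∈ (I : FractionalIdeal (𝓞 K)⁰ K), a ≠ 0 ∧ ∀ w : InfinitePlace K, u w * w a ≤ c := by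
  have hprod : 0 < ∏ w, u w ^ mult w := Finset.prod_pos fun w _ => pow_pos (hu w) _
  obtain ⟨a, ha, ha0, hle⟩ := exists_ne_zero_mem_ideal_le_of_le_prod I
    (f := fun w => (c / u w).toNNReal) (by
      simp_rw [Real.coe_toNNReal _ (div_nonneg hc (hu _).le), div_pow, Finset.prod_div_distrib,
        Finset.prod_pow_eq_pow_sum, sum_mult_eq]
      rwa [le_div_iff₀ hprod, ← div_pow])
  exact ⟨a, ha, ha0, fun w => (le_div_iff₀' (hu w)).mp
    ((hle w).trans_eq (Real.coe_toNNReal _ (div_nonneg hc (hu w).le)))⟩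

end NumberField.mixedEmbedding

namespace NumberField

open InfinitePlace

variable {K : Type*} [Field K] [NumberField K]

/-- `‖x‖_D` for the Arakelov divisor `D = (I, u)`; it does not depend on `I`. -/
noncomputable def arakelovNorm (u : InfinitePlace K → ℝ) (x : K) : ℝ :=
  √(∑ w, (w.mult : ℝ) * (u w * w x) ^ 2)

theorem sqrt_finrank_le_arakelovNorm {u : InfinitePlace K → ℝ} {x : K}
    (h : 1 ≤ ∏ w, (u w * w x) ^ mult w) : √(finrank ℚ K) ≤ arakelovNorm u x := by
  refine Real.sqrt_le_sqrt ?_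
  have := Real.sum_le_sum_mul_of_one_le_prod_pow Finset.univ mult
    (y := fun w => (u w * w x) ^ 2) (fun _ _ => sq_nonneg _) (by
      simp_rw [← pow_mul, mul_comm 2, pow_mul, Finset.prod_pow]
      exact one_le_pow₀ h)
  rwa [← Nat.cast_sum, sum_mult_eq] at this

theorem arakelovNorm_le_of_forall_le {u : InfinitePlace K → ℝ} (hu : ∀ w, 0 ≤ u w) {x : K}
    {c : ℝ} (hc : 0 ≤ c) (h : ∀ w, u w * w x ≤ c) : arakelovNorm u x ≤ √(finrank ℚ K) * c := by
  rw [← Real.sqrt_sq hc, ← Real.sqrt_mul (Nat.cast_nonneg _), ← sum_mult_eq, Nat.cast_sum,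
    Finset.sum_mul]
  exact Real.sqrt_le_sqrt (Finset.sum_le_sum fun w _ => mul_le_mul_of_nonneg_left
    (pow_le_pow_left₀ (mul_nonneg (hu w) (apply_nonneg w x)) (h w) 2) (Nat.cast_nonneg _))

theorem one_le_prod_mul_pow_mult_of_mem {I : FractionalIdeal (𝓞 K)⁰ K}
    {u : InfinitePlace K → ℝ} (hu : ∀ w, 0 ≤ u w)
    (hdeg : (∏ w, u w ^ mult w) * (absNorm I : ℝ) = 1) {x : K} (hx : x ∈ I) (hx0 : x ≠ 0) :
    1 ≤ ∏ w, (u w * w x) ^ mult w := by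
  simp_rw [mul_pow, Finset.prod_mul_distrib, prod_eq_abs_norm, ← hdeg]
  gcongr
  · exact Finset.prod_nonneg fun w _ => pow_nonneg (hu w) _
  · exact_mod_cast absNorm_le_abs_norm_of_mem hx hx0

end NumberField

theorem arakelov_degree_zero_bounds_general (F : Type*) [Field F] [NumberField F]
    (I : FractionalIdeal (𝓞 F)⁰ F)
    (u : InfinitePlace F → ℝ) (hu : ∀ w, 0 < u w)
    (hdeg : (∏ w : InfinitePlace F, u w ^ w.mult) * (absNorm I : ℝ) = 1) :
    (∀ f : F, f ∈ I → f ≠ 0 →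
        Real.sqrt (∑ w : InfinitePlace F, (w.mult : ℝ) * (u w * w f) ^ 2) ≥
          Real.sqrt (finrank ℚ F)) ∧
      ∃ f : F, f ∈ I ∧ f ≠ 0 ∧
        Real.sqrt (∑ w : InfinitePlace F, (w.mult : ℝ) * (u w * w f) ^ 2) ≤
          Real.sqrt (finrank ℚ F) *
            (2 / Real.pi) ^ ((InfinitePlace.nrComplexPlaces F : ℝ) / (finrank ℚ F)) *
              |(discr F : ℝ)| ^ ((1 : ℝ) / (2 * finrank ℚ F)) := by
  have hI : I ≠ 0 := by
    rintro rfl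
    simp at hdeg
  have hn : (finrank ℚ F : ℝ) ≠ 0 := Nat.cast_ne_zero.mpr finrank_pos.ne'
  set c := (2 / Real.pi) ^ ((InfinitePlace.nrComplexPlaces F : ℝ) / (finrank ℚ F)) *
    |(discr F : ℝ)| ^ ((1 : ℝ) / (2 * finrank ℚ F))
  have hc : c ^ finrank ℚ F =
      (2 / Real.pi) ^ InfinitePlace.nrComplexPlaces F * √|(discr F : ℝ)| := by
    rw [mul_pow, ← Real.rpow_mul_natCast (by positivity), ← Real.rpow_mul_natCast (abs_nonneg _),
      div_mul_cancel₀ _ hn, Real.rpow_natCast, Real.sqrt_eq_rpow]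
    field_simp
  refine ⟨fun f hf hf0 => sqrt_finrank_le_arakelovNorm
    (one_le_prod_mul_pow_mult_of_mem (fun w => (hu w).le) hdeg hf hf0), ?_⟩
  obtain ⟨a, ha, ha0, hle⟩ := mixedEmbedding.exists_ne_zero_mem_ideal_forall_mul_le
    (Units.mk0 I hI) hu (c := c) (by positivity) (by
      rw [Units.val_mk0, mul_assoc, mul_comm (absNorm I : ℝ), hdeg, mul_one, hc])
  exact ⟨a, ha, ha0,
    (arakelovNorm_le_of_forall_le (fun w => (hu w).le) (by positivity) hle).trans_eq
      (mul_assoc _ _ _).symm⟩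

/-- Corollary 4.5. Let `D = (I,u)` be an Arakelov divisor of
degree `0`, i.e. `N(u)·N(I) = 1`.  Then every nonzero `f ∈ I` has `‖f‖_D ≥ √n`,
and there exists a nonzero `f ∈ I` with
`‖f‖_D ≤ √n·(2/π)^{r₂/n}·|Δ_F|^{1/(2n)}`. -/
theorem arakelov_degree_zero_bounds (F : Type*) [Field F] [NumberField F]
    (I : FractionalIdeal (𝓞 F)⁰ F) (hI : I ≠ 0)
    (u : InfinitePlace F → ℝ) (hu : ∀ w, 0 < u w)
    (hdeg : (∏ w : InfinitePlace F, u w ^ w.mult) * (absNorm I : ℝ) = 1) :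
    (∀ f : F, f ∈ I → f ≠ 0 →
        Real.sqrt (∑ w : InfinitePlace F, (w.mult : ℝ) * (u w * w f) ^ 2) ≥
          Real.sqrt (finrank ℚ F)) ∧
      ∃ f : F, f ∈ I ∧ f ≠ 0 ∧
        Real.sqrt (∑ w : InfinitePlace F, (w.mult : ℝ) * (u w * w f) ^ 2) ≤
          Real.sqrt (finrank ℚ F) *
            (2 / Real.pi) ^ ((InfinitePlace.nrComplexPlaces F : ℝ) / (finrank ℚ F)) *
              |(discr F : ℝ)| ^ ((1 : ℝ) / (2 * finrank ℚ F)) :=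
  arakelov_degree_zero_bounds_general F I u hu hdeg
end

section
/- Let F be a number field of degree n and let I be a fractional ideal containing 1 as a minimal element (i.e., no nonzero g ∈ I satisfies |σ(g)| < 1 for all infinite primes σ). Set D = (I, N(I)^{−1/n}). Then ‖1‖_D ≤ √n·‖x‖_D for every nonzero x ∈ I; in particular 1 is at most √n times as long as a shortest nonzero element of the lattice associated to D. -/
open NumberField Module FractionalIdeal
open scoped nonZeroDivisors

/-- Prop. 7.1. If `1` is a minimal element of the fractional
ideal `I` (no nonzero `g ∈ I` has `|σ(g)| < 1` at all infinite places) and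
`D = (I, N(I)^{-1/n})` is the associated reduced Arakelov divisor, then
`‖1‖_D ≤ √n·‖x‖_D` for every nonzero `x ∈ I`. -/
theorem reduced_one_almost_shortest (F : Type*) [Field F] [NumberField F]
    (I : FractionalIdeal (𝓞 F)⁰ F) (hI : I ≠ 0)
    (hone : (1 : F) ∈ I)
    (hmin : ∀ g : F, g ∈ I → (∀ w : InfinitePlace F, w g < 1) → g = 0) :
    ∀ x : F, x ∈ I → x ≠ 0 →
      Real.sqrt (∑ w : InfinitePlace F,
          (w.mult : ℝ) * ((absNorm I : ℝ) ^ (-(1 : ℝ) / (finrank ℚ F)) * w 1) ^ 2) ≤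
        Real.sqrt (finrank ℚ F) *
          Real.sqrt (∑ w : InfinitePlace F,
            (w.mult : ℝ) * ((absNorm I : ℝ) ^ (-(1 : ℝ) / (finrank ℚ F)) * w x) ^ 2) := by
  intro x hx hx0
  have hN : (0 : ℝ) < (absNorm I : ℝ) := by
    rcases (FractionalIdeal.absNorm_nonneg I).lt_or_eq with h | h
    · exact_mod_cast h
    · exact absurd (FractionalIdeal.absNorm_eq_zero_iff.mp h.symm) hI
  set c : ℝ := (absNorm I : ℝ) ^ (-(1 : ℝ) / (finrank ℚ F)) with hc
  have hcpos : 0 < c := Real.rpow_pos_of_pos hN _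
  obtain ⟨w0, hw0⟩ : ∃ w : InfinitePlace F, 1 ≤ w x := by
    by_contra h
    push_neg at h
    exact hx0 (hmin x hx h)
  have hL : ∑ w : InfinitePlace F, (w.mult : ℝ) * (c * w 1) ^ 2
      = (finrank ℚ F : ℝ) * c ^ 2 := by
    simp only [_root_.map_one, mul_one]
    rw [← Finset.sum_mul]
    congr 1
    exact_mod_cast congrArg (Nat.cast : ℕ → ℝ) (InfinitePlace.sum_mult_eq (K := F))
  have hR : c ^ 2 ≤ ∑ w : InfinitePlace F, (w.mult : ℝ) * (c * w x) ^ 2 := by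
    have h0 : ∀ w : InfinitePlace F, w ∈ Finset.univ →
        0 ≤ (w.mult : ℝ) * (c * w x) ^ 2 := fun w _ => by positivity
    refine le_trans ?_ (Finset.single_le_sum h0 (Finset.mem_univ w0))
    have hm : (1 : ℝ) ≤ (w0.mult : ℝ) := by
      exact_mod_cast Nat.one_le_iff_ne_zero.mpr (by
        have := w0.mult_pos; omega)
    have h1 : c ^ 2 ≤ (c * w0 x) ^ 2 := by
      have : c ≤ c * w0 x := le_mul_of_one_le_right hcpos.le hw0
      exact pow_le_pow_left₀ hcpos.le this 2
    nlinarith [sq_nonneg (c * w0 x)]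
  rw [hL, Real.sqrt_mul (by positivity)]
  gcongr
end

section
/- Let F be a number field of degree n with r₂ complex infinite primes and discriminant Δ_F, and set ∂_F = (2/π)^{r₂}·√|Δ_F|. If I is a fractional ideal such that the Arakelov divisor d(I) = (I, N(I)^{−1/n}) is reduced (i.e., 1 ∈ I is a minimal element), then I^{−1} is an integral ideal of O_F of norm N(I^{−1}) ≤ ∂_F. -/
open NumberField Module FractionalIdeal
open scoped nonZeroDivisors

/-!
Since `1 ∈ I` means `1 ≤ I`, inverting gives `I⁻¹ ≤ 1`. If `N(I⁻¹) > ∂_F`, then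
`N(I) · ∂_F < 1`, and this says exactly that the Minkowski bound of the lattice `I` is smaller
than the volume of the box `{x : ‖x_w‖ < 1 for all w}` in the mixed space. Minkowski's convex body theorem then produces a
nonzero `g ∈ I` with `w g < 1` at every infinite place, contradicting the minimality of `1`.
-/

namespace FractionalIdeal

variable {R K : Type*} [CommRing R] [Field K] [Algebra R K]

theorem ne_zero_of_one_mem {I : FractionalIdeal R⁰ K} (h : (1 : K) ∈ I) : I ≠ 0 := by
  rintro rfl
  simp at h

theorem inv_le_one_of_one_mem [IsDomain R] [IsFractionRing R K]
    {I : FractionalIdeal R⁰ K} (h : (1 : K) ∈ I) : I⁻¹ ≤ 1 := by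
  simpa using
    inv_anti_mono (one_ne_zero' (FractionalIdeal R⁰ K)) (ne_zero_of_one_mem h) (one_le.mpr h)

end FractionalIdeal

namespace NumberField.mixedEmbedding

open InfinitePlace MeasureTheory

variable (K : Type*) [Field K] [NumberField K]

noncomputable abbrev minkowskiConstant : ℝ :=
  (2 / Real.pi) ^ nrComplexPlaces K * Real.sqrt |(discr K : ℝ)|

open scoped Classical in
theorem volume_convexBodyLT_one_toReal :
    (volume (convexBodyLT K 1)).toReal = 2 ^ nrRealPlaces K * Real.pi ^ nrComplexPlaces K := by
  simp [convexBodyLT_volume]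

open scoped Classical in
theorem minkowskiBound_toReal_s8 (I : (FractionalIdeal (𝓞 K)⁰ K)ˣ) :
    (minkowskiBound K I).toReal =
      absNorm I.1 * minkowskiConstant K * (volume (convexBodyLT K 1)).toReal := by
  rw [minkowskiBound, volume_fundamentalDomain_fractionalIdealLatticeBasis,
    volume_fundamentalDomain_latticeBasis, volume_convexBodyLT_one_toReal, mixedEmbedding.finrank,
    ← card_add_two_mul_card_eq_rank]
  simp [ENNReal.toReal_ofReal (Rat.cast_nonneg.mpr (absNorm_nonneg I.1)), Int.norm_eq_abs]
  rw [minkowskiConstant, div_pow, pow_add, pow_mul']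
  field_simp

theorem exists_ne_zero_mem_lt_one_of_absNorm_mul_lt_one (I : (FractionalIdeal (𝓞 K)⁰ K)ˣ)
    (h : absNorm I.1 * minkowskiConstant K < 1) :
    ∃ a ∈ (I : FractionalIdeal (𝓞 K)⁰ K), a ≠ 0 ∧ ∀ w : InfinitePlace K, w a < 1 := by
  classical
  have hvol_ne_top : volume (convexBodyLT K 1) ≠ ⊤ := by
    simp [convexBodyLT_volume, ENNReal.mul_eq_top]
  have hvol_pos : 0 < (volume (convexBodyLT K 1)).toReal := by
    rw [volume_convexBodyLT_one_toReal]; positivity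
  have hlt : minkowskiBound K I < volume (convexBodyLT K 1) := by
    rw [← ENNReal.toReal_lt_toReal (minkowskiBound_lt_top K I).ne hvol_ne_top,
      minkowskiBound_toReal_s8]
    exact mul_lt_of_lt_one_left hvol_pos h
  simpa using exists_ne_zero_mem_ideal_lt K I hlt

end NumberField.mixedEmbedding

open NumberField.mixedEmbedding in
theorem reduced_inverse_integral_small_norm_general (F : Type*) [Field F] [NumberField F]
    (I : FractionalIdeal (𝓞 F)⁰ F)
    (hone : (1 : F) ∈ I)
    (hmin : ∀ g : F, g ∈ I → (∀ w : InfinitePlace F, w g < 1) → g = 0) :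
    I⁻¹ ≤ 1 ∧
      (absNorm I⁻¹ : ℝ) ≤
        (2 / Real.pi) ^ (InfinitePlace.nrComplexPlaces F) * Real.sqrt |(discr F : ℝ)| := by
  have hI : I ≠ 0 := ne_zero_of_one_mem hone
  refine ⟨inv_le_one_of_one_mem hone, ?_⟩
  by_contra! hc
  have hnorm_pos : (0 : ℝ) < absNorm I := by
    exact_mod_cast (absNorm_nonneg I).lt_of_ne' (absNorm_eq_zero_iff.not.mpr hI)
  have hsmall : absNorm I * minkowskiConstant F < 1 := by
    rwa [map_inv₀, Rat.cast_inv, ← mul_one (absNorm I : ℝ)⁻¹, lt_inv_mul_iff₀ hnorm_pos] at hc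
  obtain ⟨a, haI, ha0, haw⟩ :=
    exists_ne_zero_mem_lt_one_of_absNorm_mul_lt_one F (.mk0 I hI) hsmall
  exact ha0 (hmin a haI haw)

/-- Prop. 7.2(i). If the Arakelov divisor
`d(I) = (I, N(I)^{-1/n})` is reduced, i.e. `1 ∈ I` is a minimal element, then
`I⁻¹` is an integral ideal of `O_F` of norm at most
`∂_F = (2/π)^{r₂}·√|Δ_F|`. -/
theorem reduced_inverse_integral_small_norm (F : Type*) [Field F] [NumberField F]
    (I : FractionalIdeal (𝓞 F)⁰ F) (hI : I ≠ 0)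
    (hone : (1 : F) ∈ I)
    (hmin : ∀ g : F, g ∈ I → (∀ w : InfinitePlace F, w g < 1) → g = 0) :
    I⁻¹ ≤ 1 ∧
      (absNorm I⁻¹ : ℝ) ≤
        (2 / Real.pi) ^ (InfinitePlace.nrComplexPlaces F) * Real.sqrt |(discr F : ℝ)| :=
  reduced_inverse_integral_small_norm_general F I hone hmin
end

section
/- Let F be a number field and suppose d(I) = (I, N(I)^{−1/n}) and d(I') = (I', N(I')^{−1/n}) are reduced Arakelov divisors. If there exists f ∈ F^* with I' = f·I and N(I')^{1/n} = N(I)^{1/n}·σ(f) for every infinite prime σ (i.e., all archimedean absolute values/embeddings of f equal the positive rational number N(I'/I)^{1/n}), then I = I'. -/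
open NumberField Module FractionalIdeal
open scoped nonZeroDivisors

/-- Prop. 7.2(iii), injectivity into the oriented Arakelov
class group. If `d(I)` and `d(I')` are reduced Arakelov divisors (each ideal
contains `1` as a minimal element) and there is `f ∈ F^*` with `I' = f·I` such
that every embedding `σ : F → ℂ` satisfies
`σ(f) = N(I')^{1/n}/N(I)^{1/n}` (a positive rational number), then `I = I'`. -/
theorem reduced_injective_oriented (F : Type*) [Field F] [NumberField F]
    (I I' : FractionalIdeal (𝓞 F)⁰ F) (hI : I ≠ 0) (hI' : I' ≠ 0)
    (honeI : (1 : F) ∈ I)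
    (hminI : ∀ g : F, g ∈ I → (∀ w : InfinitePlace F, w g < 1) → g = 0)
    (honeI' : (1 : F) ∈ I')
    (hminI' : ∀ g : F, g ∈ I' → (∀ w : InfinitePlace F, w g < 1) → g = 0)
    (f : F) (hf : f ≠ 0)
    (hII' : I' = spanSingleton (𝓞 F)⁰ f * I)
    (hconj : ∀ φ : F →+* ℂ,
      φ f = (((absNorm I' : ℝ) ^ ((1 : ℝ) / (finrank ℚ F)) /
        (absNorm I : ℝ) ^ ((1 : ℝ) / (finrank ℚ F)) : ℝ) : ℂ)) :
    I = I' := by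
  set c : ℝ := (absNorm I' : ℝ) ^ ((1 : ℝ) / (finrank ℚ F)) /
      (absNorm I : ℝ) ^ ((1 : ℝ) / (finrank ℚ F)) with hc
  -- c ≥ 0
  have hc0 : 0 ≤ c := by
    apply div_nonneg <;>
      exact Real.rpow_nonneg (by exact_mod_cast absNorm_nonneg _) _
  -- every infinite place of f is c
  have hwf : ∀ w : InfinitePlace F, w f = c := by
    intro w
    rw [← InfinitePlace.norm_embedding_eq, hconj w.embedding, Complex.norm_real,
      Real.norm_eq_abs, abs_of_nonneg hc0]
  -- f ∈ I'
  have hfI' : f ∈ I' := by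
    rw [hII']
    exact mem_singleton_mul.mpr ⟨1, honeI, (mul_one f).symm⟩
  -- f⁻¹ ∈ I
  have hfinvI : f⁻¹ ∈ I := by
    have hIeq : I = spanSingleton (𝓞 F)⁰ f⁻¹ * I' := by
      rw [hII', ← mul_assoc, spanSingleton_mul_spanSingleton, inv_mul_cancel₀ hf,
        spanSingleton_one, one_mul]
    rw [hIeq]
    exact mem_singleton_mul.mpr ⟨1, honeI', (mul_one f⁻¹).symm⟩
  -- c > 0
  have hcpos : 0 < c := by
    rcases hc0.lt_or_eq with h | h
    · exact h
    · exfalso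
      apply hf
      have w := (inferInstance : Nonempty (InfinitePlace F)).some
      have h2 := hwf w
      rw [← h] at h2
      exact (map_eq_zero w).mp h2
  -- c ≥ 1, else f = 0
  have hcge : 1 ≤ c := by
    by_contra h
    push_neg at h
    exact hf (hminI' f hfI' (fun w => by rw [hwf w]; exact h))
  -- c ≤ 1, else f⁻¹ = 0
  have hcle : c ≤ 1 := by
    by_contra h
    push_neg at h
    have : f⁻¹ = 0 := hminI f⁻¹ hfinvI (fun w => by
      rw [map_inv₀, hwf w]
      exact inv_lt_one_of_one_lt₀ h)
    exact hf (by simpa using this)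
  have hc1 : c = 1 := le_antisymm hcle hcge
  -- hence f = 1
  have hf1 : f = 1 := by
    have w := (inferInstance : Nonempty (InfinitePlace F)).some
    have h := hconj w.embedding
    rw [hc1] at h
    have : w.embedding f = w.embedding 1 := by simpa using h
    exact w.embedding.injective this
  rw [hII', hf1, spanSingleton_one, one_mul]
end

section
/- Let b₁,…,b_n be an LLL-reduced basis of a lattice in a real inner product space, with Gram–Schmidt orthogonalization b₁^*,…,b_n^*. Then for every lattice vector x = Σᵢ mᵢbᵢ (mᵢ ∈ ℤ) one has |mᵢ|·‖bᵢ^*‖ ≤ (3/√2)^{n−i}·‖x‖ for 1 ≤ i ≤ n. -/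
open Module
open scoped RealInnerProductSpace

/-- The Gram–Schmidt orthogonalization of a family of vectors indexed by `Fin n`. -/
noncomputable def gramSchmidtFin {n : ℕ} [NeZero n] {E : Type*}
    [NormedAddCommGroup E] [InnerProductSpace ℝ E] (b : Fin n → E) : Fin n → E :=
  @InnerProductSpace.gramSchmidt ℝ E _ _ _ (Fin n) _
    (inferInstance : LocallyFiniteOrderBot (Fin n))
    (inferInstance : WellFoundedLT (Fin n)) b

/-!
In the orthogonal basis `bⱼ*`, the coefficient of `x = ∑ mⱼ bⱼ` along `bᵢ*` is
`mᵢ + ∑_{l > i} m_l μ_{li}`, so size reduction gives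
`|mᵢ|‖bᵢ*‖ ≤ ‖x‖ + ½ ∑_{l > i} |m_l| ‖bᵢ*‖`. The Lovász condition gives
`‖bᵢ*‖ ≤ √2^{l-i} ‖b_l*‖`, so by downward induction on `i` the sum is at most
`∑_{l > i} √2^{l-i} (3/√2)^{n-1-l} ‖x‖ = 2((3/√2)^{n-1-i} - √2^{n-1-i}) ‖x‖`.
-/

open Finset InnerProductSpace

section

variable {E : Type*} [NormedAddCommGroup E] [InnerProductSpace ℝ E]

theorem norm_le_sqrt_two_mul_norm_of_lovasz {u v : E} {μ : ℝ} (huv : ⟪v, u⟫ = 0)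
    (hμ : |μ| ≤ 1 / 2) (h : 3 / 4 * ‖u‖ ^ 2 ≤ ‖v + μ • u‖ ^ 2) :
    ‖u‖ ≤ √2 * ‖v‖ := by
  have hpyth : ‖v + μ • u‖ ^ 2 = ‖v‖ ^ 2 + μ ^ 2 * ‖u‖ ^ 2 := by
    rw [norm_add_sq_real, real_inner_smul_right, huv, norm_smul, Real.norm_eq_abs, mul_pow,
      sq_abs]
    ring
  have hμ2 : μ ^ 2 ≤ 1 / 4 := by nlinarith [sq_abs μ, abs_nonneg μ]
  have hsq : ‖u‖ ^ 2 ≤ 2 * ‖v‖ ^ 2 := by nlinarith [sq_nonneg ‖u‖]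
  calc ‖u‖ = √(‖u‖ ^ 2) := (Real.sqrt_sq (norm_nonneg u)).symm
    _ ≤ √(2 * ‖v‖ ^ 2) := Real.sqrt_le_sqrt hsq
    _ = √2 * ‖v‖ := by rw [Real.sqrt_mul zero_le_two, Real.sqrt_sq (norm_nonneg v)]

variable {ι : Type*} [LinearOrder ι] [LocallyFiniteOrderBot ι] [WellFoundedLT ι]

theorem inner_self_gramSchmidt (f : ι → E) (i : ι) :
    ⟪f i, gramSchmidt ℝ f i⟫ = ‖gramSchmidt ℝ f i‖ ^ 2 := by
  conv_lhs => rw [gramSchmidt_def'' ℝ f i]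
  rw [inner_add_left, sum_inner, real_inner_self_eq_norm_sq, add_eq_left]
  refine sum_eq_zero fun j hj => ?_
  rw [real_inner_smul_left, gramSchmidt_orthogonal ℝ f (mem_Iio.mp hj).ne, mul_zero]

variable [Fintype ι] [LocallyFiniteOrderTop ι]

theorem inner_sum_smul_gramSchmidt (f : ι → E) (c : ι → ℝ) (i : ι) :
    ⟪∑ j, c j • f j, gramSchmidt ℝ f i⟫ =
      c i * ‖gramSchmidt ℝ f i‖ ^ 2 + ∑ l ∈ Ioi i, c l * ⟪f l, gramSchmidt ℝ f i⟫ := by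
  have hlow : ∀ l ∈ univ, l ∉ Ici i → c l * ⟪f l, gramSchmidt ℝ f i⟫ = 0 := fun l _ hl => by
    rw [real_inner_comm, gramSchmidt_inv_triangular ℝ f (not_le.mp (mem_Ici.not.mp hl)),
      mul_zero]
  simp only [sum_inner, real_inner_smul_left]
  rw [← sum_subset (subset_univ _) hlow, ← add_sum_Ioi_eq_sum_Ici, inner_self_gramSchmidt]

theorem abs_mul_norm_gramSchmidt_le (f : ι → E)
    (hsize : ∀ i j : ι, j < i →
      |⟪f i, gramSchmidt ℝ f j⟫ / ‖gramSchmidt ℝ f j‖ ^ 2| ≤ 1 / 2)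
    (c : ι → ℝ) (i : ι) :
    |c i| * ‖gramSchmidt ℝ f i‖ ≤
      ‖∑ j, c j • f j‖ + 1 / 2 * ∑ l ∈ Ioi i, |c l| * ‖gramSchmidt ℝ f i‖ := by
  obtain hg | hg := (norm_nonneg (gramSchmidt ℝ f i)).eq_or_lt
  · rw [← hg, mul_zero]
    positivity
  set g := ‖gramSchmidt ℝ f i‖
  have hcoeff : ∀ l ∈ Ioi i, |c l * ⟪f l, gramSchmidt ℝ f i⟫| ≤ 1 / 2 * (|c l| * g) * g :=
    fun l hl => by
      have h := hsize l i (mem_Ioi.mp hl)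
      rw [abs_div, abs_of_pos (pow_pos hg 2), div_le_iff₀ (pow_pos hg 2)] at h
      rw [abs_mul]
      nlinarith [abs_nonneg (c l)]
  refine le_of_mul_le_mul_right ?_ hg
  calc |c i| * g * g = |⟪∑ j, c j • f j, gramSchmidt ℝ f i⟫ -
        ∑ l ∈ Ioi i, c l * ⟪f l, gramSchmidt ℝ f i⟫| := by
        rw [inner_sum_smul_gramSchmidt, add_sub_cancel_right, abs_mul,
          abs_of_nonneg (sq_nonneg g)]
        ring
    _ ≤ ‖∑ j, c j • f j‖ * g + ∑ l ∈ Ioi i, 1 / 2 * (|c l| * g) * g :=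
        (abs_sub _ _).trans (add_le_add (abs_real_inner_le_norm _ _)
          ((abs_sum_le_sum_abs _ _).trans (sum_le_sum hcoeff)))
    _ = (‖∑ j, c j • f j‖ + 1 / 2 * ∑ l ∈ Ioi i, |c l| * g) * g := by
        rw [← sum_mul, ← mul_sum]
        ring

end

theorem Fin.le_pow_sub_mul_of_le_mul_succ {n : ℕ} {f : Fin n → ℝ} {c : ℝ} (hc : 0 ≤ c)
    (hf : ∀ i j : Fin n, (j : ℕ) + 1 = i → f j ≤ c * f i) {i l : Fin n} (hil : i ≤ l) :
    f i ≤ c ^ ((l : ℕ) - i) * f l := by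
  obtain ⟨d, hd⟩ := Nat.exists_eq_add_of_le (Fin.le_def.mp hil)
  induction d generalizing l with
  | zero => simp [Fin.ext (hd.trans (add_zero _)).symm]
  | succ d ih =>
    have hlt : (i : ℕ) + d < n := by omega
    calc f i ≤ c ^ d * f ⟨i + d, hlt⟩ := by
          simpa using ih (l := ⟨i + d, hlt⟩) (Fin.le_def.mpr (Nat.le_add_right _ _)) rfl
      _ ≤ c ^ d * (c * f l) := by gcongr; exact hf _ _ (by simp; omega)
      _ = c ^ ((l : ℕ) - i) * f l := by rw [hd, Nat.add_sub_cancel_left, pow_succ, mul_assoc]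

theorem Fin.sum_Ioi_eq_sum_range {M : Type*} [AddCommMonoid M] {n : ℕ} (i : Fin n) (g : ℕ → M) :
    ∑ l ∈ Ioi i, g l = ∑ k ∈ range (n - 1 - i), g (i + 1 + k) := by
  rw [show n - 1 - (i : ℕ) = n - (i + 1) by omega, ← sum_Ico_eq_sum_range,
    Ico_add_one_left_eq_Ioo, ← Fin.map_valEmbedding_Ioi, sum_map]
  rfl

theorem sum_range_sqrt_two_pow_mul_pow (d : ℕ) :
    ∑ k ∈ range d, √2 ^ (k + 1) * (3 / √2) ^ (d - 1 - k) = 2 * ((3 / √2) ^ d - √2 ^ d) := by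
  have hs : √2 ^ 2 = 2 := Real.sq_sqrt zero_le_two
  have hq : √2 * (3 / √2) = 3 := mul_div_cancel₀ 3 (by positivity)
  have hgeom := geom_sum₂_mul √2 (3 / √2) d
  rw [show ∑ k ∈ range d, √2 ^ (k + 1) * (3 / √2) ^ (d - 1 - k) =
      √2 * ∑ k ∈ range d, √2 ^ k * (3 / √2) ^ (d - 1 - k) by
    rw [mul_sum]; exact sum_congr rfl fun k _ => by ring]
  set S := ∑ k ∈ range d, √2 ^ k * (3 / √2) ^ (d - 1 - k)
  -- `√2 - 3/√2 = -1/√2`, so `hgeom` says `S = √2 ((3/√2)^d - √2^d)`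
  linear_combination (-2) * hgeom + S * (3 / √2) * hs - S * √2 * hq

theorem abs_mul_norm_gramSchmidtFin_le {n : ℕ} [NeZero n] {E : Type*} [NormedAddCommGroup E]
    [InnerProductSpace ℝ E] (b : Fin n → E)
    (hsize : ∀ i j : Fin n, j < i →
      |⟪b i, gramSchmidtFin b j⟫ / ‖gramSchmidtFin b j‖ ^ 2| ≤ 1 / 2)
    (hstep : ∀ i j : Fin n, (j : ℕ) + 1 = i → ‖gramSchmidtFin b j‖ ≤ √2 * ‖gramSchmidtFin b i‖)
    (c : Fin n → ℝ) (i : Fin n) :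
    |c i| * ‖gramSchmidtFin b i‖ ≤ (3 / √2) ^ (n - 1 - (i : ℕ)) * ‖∑ j, c j • b j‖ := by
  induction i using WellFoundedGT.induction with
  | _ i ih =>
  set x := ∑ j, c j • b j
  have hterm : ∀ l ∈ Ioi i, |c l| * ‖gramSchmidtFin b i‖ ≤
      √2 ^ ((l : ℕ) - i) * (3 / √2) ^ (n - 1 - (l : ℕ)) * ‖x‖ := fun l hl => by
    have hil := mem_Ioi.mp hl
    calc |c l| * ‖gramSchmidtFin b i‖
        ≤ |c l| * (√2 ^ ((l : ℕ) - i) * ‖gramSchmidtFin b l‖) := by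
          gcongr
          exact Fin.le_pow_sub_mul_of_le_mul_succ (by positivity) hstep hil.le
      _ = √2 ^ ((l : ℕ) - i) * (|c l| * ‖gramSchmidtFin b l‖) := by ring
      _ ≤ √2 ^ ((l : ℕ) - i) * ((3 / √2) ^ (n - 1 - (l : ℕ)) * ‖x‖) := by
          gcongr _ * ?_
          exact ih l hil
      _ = _ := by ring
  have hsum : ∑ l ∈ Ioi i, √2 ^ ((l : ℕ) - i) * (3 / √2) ^ (n - 1 - (l : ℕ)) =
      2 * ((3 / √2) ^ (n - 1 - (i : ℕ)) - √2 ^ (n - 1 - (i : ℕ))) := by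
    rw [Fin.sum_Ioi_eq_sum_range i (fun l => √2 ^ (l - i) * (3 / √2) ^ (n - 1 - l)),
      ← sum_range_sqrt_two_pow_mul_pow]
    refine sum_congr rfl fun k hk => ?_
    rw [mem_range] at hk
    congr 2 <;> omega
  have hone : 1 ≤ √2 ^ (n - 1 - (i : ℕ)) := one_le_pow₀ (by simp)
  calc |c i| * ‖gramSchmidtFin b i‖
      ≤ ‖x‖ + 1 / 2 * ∑ l ∈ Ioi i, |c l| * ‖gramSchmidtFin b i‖ :=
        abs_mul_norm_gramSchmidt_le b hsize c i
    _ ≤ ‖x‖ + 1 / 2 * ∑ l ∈ Ioi i, √2 ^ ((l : ℕ) - i) * (3 / √2) ^ (n - 1 - (l : ℕ)) * ‖x‖ := by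
        gcongr ‖x‖ + 1 / 2 * ?_
        exact sum_le_sum hterm
    _ = (1 + (3 / √2) ^ (n - 1 - (i : ℕ)) - √2 ^ (n - 1 - (i : ℕ))) * ‖x‖ := by
        rw [← sum_mul, hsum]
        ring
    _ ≤ (3 / √2) ^ (n - 1 - (i : ℕ)) * ‖x‖ := by gcongr; linarith

/-- Indices are zero-based, so the paper's exponent `n - i` reads `n - 1 - i`. -/
theorem lll_coefficient_bound_general (n : ℕ) [NeZero n]
    (E : Type*) [NormedAddCommGroup E] [InnerProductSpace ℝ E]
    (b : Fin n → E)
    (hsize : ∀ i j : Fin n, j < i →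
      |⟪b i, gramSchmidtFin b j⟫ / ‖gramSchmidtFin b j‖ ^ 2| ≤ 1 / 2)
    (hlovasz : ∀ i j : Fin n, (j : ℕ) + 1 = (i : ℕ) →
      ‖gramSchmidtFin b i +
          (⟪b i, gramSchmidtFin b j⟫ / ‖gramSchmidtFin b j‖ ^ 2) • gramSchmidtFin b j‖ ^ 2 ≥
        3 / 4 * ‖gramSchmidtFin b j‖ ^ 2) :
    ∀ (m : Fin n → ℤ) (i : Fin n),
      (|m i| : ℝ) * ‖gramSchmidtFin b i‖ ≤
        (3 / Real.sqrt 2) ^ (n - 1 - (i : ℕ)) * ‖∑ j, (m j : ℝ) • b j‖ := by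
  have hstep : ∀ i j : Fin n, (j : ℕ) + 1 = i →
      ‖gramSchmidtFin b j‖ ≤ √2 * ‖gramSchmidtFin b i‖ := fun i j hij =>
    have hji : j < i := Fin.lt_def.mpr (by omega)
    norm_le_sqrt_two_mul_norm_of_lovasz (gramSchmidt_orthogonal ℝ b hji.ne')
      (hsize i j hji) (hlovasz i j hij)
  exact fun m => abs_mul_norm_gramSchmidtFin_le b hsize hstep (fun j => m j)

/-- Lemma 10.1, Lenstra–Lenstra–Lovász. Let `b₁,…,b_n` be an
LLL-reduced basis (size-reduced Gram–Schmidt coefficients `|μ_{ij}| ≤ 1/2` for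
`j < i` and the Lovász condition `‖bᵢ* + μ_{i,i−1}·b_{i−1}*‖² ≥ (3/4)‖b_{i−1}*‖²`)
of a lattice in a real inner product space, with Gram–Schmidt orthogonalization
`bᵢ*`.  Then every lattice vector `x = Σᵢ mᵢ bᵢ` with `mᵢ ∈ ℤ` satisfies
`|mᵢ|·‖bᵢ*‖ ≤ (3/√2)^{n−i}·‖x‖` (indices `i` here are zero-based, running from
`0` to `n−1`, so the exponent is `n−1−i`). -/
theorem lll_coefficient_bound (n : ℕ) [NeZero n]
    (E : Type*) [NormedAddCommGroup E] [InnerProductSpace ℝ E]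
    (b : Fin n → E) (hb : LinearIndependent ℝ b)
    (hsize : ∀ i j : Fin n, j < i →
      |⟪b i, gramSchmidtFin b j⟫ / ‖gramSchmidtFin b j‖ ^ 2| ≤ 1 / 2)
    (hlovasz : ∀ i j : Fin n, (j : ℕ) + 1 = (i : ℕ) →
      ‖gramSchmidtFin b i +
          (⟪b i, gramSchmidtFin b j⟫ / ‖gramSchmidtFin b j‖ ^ 2) • gramSchmidtFin b j‖ ^ 2 ≥
        3 / 4 * ‖gramSchmidtFin b j‖ ^ 2) :
    ∀ (m : Fin n → ℤ) (i : Fin n),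
      (|m i| : ℝ) * ‖gramSchmidtFin b i‖ ≤
        (3 / Real.sqrt 2) ^ (n - 1 - (i : ℕ)) * ‖∑ j, (m j : ℝ) • b j‖ :=
  lll_coefficient_bound_general n E b hsize hlovasz
end

section
/- Let F be a real quadratic field and let I = ℤ + fℤ be a fractional ideal with f > 0 and −1 < f̄ < 0 under the two real embeddings, such that d(I) is reduced. If N(f − 1/2) = (f − 1/2)(f̄ − 1/2) > −3/4, then for every degree-zero Arakelov divisor (I,u), the element 1 is not a shortest nonzero vector of the associated lattice. -/
open NumberField Module

/-- Claim of Example 9.5. Let `F` be a real quadratic field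
with the two real embeddings `σ, σ'`, and let `I = ℤ + fℤ` be a fractional
ideal with `σ(f) > 0`, `−1 < σ'(f) < 0`, such that `d(I)` is reduced (i.e. `1`
is a minimal element of `I`).  If `N(f − 1/2) = (σ(f)−1/2)(σ'(f)−1/2) > −3/4`,
then for every degree-zero Arakelov divisor `(I,u)` — parametrized by `υ > 0`,
inducing the squared norm `υ⁻²·σ(x)² + υ²·σ'(x)²` (up to the overall positive
factor `1/N(I)`) — the element `1` is not a shortest nonzero vector of the
associated lattice: some nonzero element of `I` is strictly shorter. -/
theorem one_not_shortest_real_quadratic (F : Type*) [Field F] [NumberField F]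
    (hdeg : finrank ℚ F = 2) (σ σ' : F →+* ℝ) (hσσ' : σ ≠ σ') (f : F)
    (hf_pos : 0 < σ f) (hf'_lt : σ' f < 0) (hf'_gt : -1 < σ' f)
    (hmin : ∀ p q : ℤ, |σ ((p : F) + (q : F) * f)| < 1 →
      |σ' ((p : F) + (q : F) * f)| < 1 → (p : F) + (q : F) * f = 0)
    (hN : (σ f - 1 / 2) * (σ' f - 1 / 2) > -(3 / 4)) :
    ∀ υ : ℝ, 0 < υ →
      ∃ p q : ℤ, (p : F) + (q : F) * f ≠ 0 ∧
        υ⁻¹ ^ 2 * (σ ((p : F) + (q : F) * f)) ^ 2 +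
            υ ^ 2 * (σ' ((p : F) + (q : F) * f)) ^ 2 <
          υ⁻¹ ^ 2 + υ ^ 2 := by
  intro υ hυ
  set a := σ f with ha
  set b := σ' f with hb
  set t := υ⁻¹ ^ 2 with ht
  set s := υ ^ 2 with hs
  have htpos : 0 < t := by positivity
  have hspos : 0 < s := by positivity
  have hσf : σ (((0 : ℤ) : F) + ((1 : ℤ) : F) * f) = a := by push_cast; rw [zero_add, one_mul]
  have hσ'f : σ' (((0 : ℤ) : F) + ((1 : ℤ) : F) * f) = b := by push_cast; rw [zero_add, one_mul]
  have hσfm : σ ((((-1) : ℤ) : F) + ((1 : ℤ) : F) * f) = a - 1 := by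
    push_cast; simp [ha, sub_eq_neg_add]
  have hσ'fm : σ' ((((-1) : ℤ) : F) + ((1 : ℤ) : F) * f) = b - 1 := by
    push_cast; simp [hb, sub_eq_neg_add]
  have ha2 : a < 2 := by nlinarith
  rcases le_or_gt a 1 with hle | hgt
  · refine ⟨0, 1, ?_, ?_⟩
    · intro h; rw [h, map_zero] at hσf; linarith
    · rw [hσf, hσ'f]
      nlinarith [mul_nonneg htpos.le (by nlinarith : (0:ℝ) ≤ 1 - a ^ 2),
        mul_pos hspos (by nlinarith : (0:ℝ) < 1 - b ^ 2)]
  · rcases lt_or_ge (t * (a ^ 2 - 1)) (s * (1 - b ^ 2)) with hc | hc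
    · refine ⟨0, 1, ?_, ?_⟩
      · intro h; rw [h, map_zero] at hσf; linarith
      · rw [hσf, hσ'f]; nlinarith
    · refine ⟨-1, 1, ?_, ?_⟩
      · intro h; rw [h, map_zero] at hσfm; linarith
      · rw [hσfm, hσ'fm]
        -- need t*(a-1)^2 + s*(b-1)^2 < t + s
        have key : (a ^ 2 - 1) * (2 * b - b ^ 2) - (a ^ 2 - 2 * a) * (1 - b ^ 2) > 0 := by
          nlinarith [mul_pos (mul_pos (mul_pos hf_pos (by linarith : (0:ℝ) < 2 - a))
              (by linarith : (0:ℝ) < 1 - b)) (by linarith : (0:ℝ) < 1 + b),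
            mul_pos (mul_pos (mul_pos (by linarith : (0:ℝ) < a - 1)
              (by linarith : (0:ℝ) < a + 1)) (by linarith : (0:ℝ) < -b))
              (by linarith : (0:ℝ) < 2 - b)]
        have h1 : (0:ℝ) < a ^ 2 - 1 := by
          linarith [mul_pos (sub_pos.2 hgt) (show (0:ℝ) < a + 1 by linarith)]
        have h2 : (0:ℝ) ≤ 2 * a - a ^ 2 := by
          linarith [mul_nonneg hf_pos.le (sub_nonneg.2 ha2.le)]
        have h3 : t * (a ^ 2 - 2 * a) * (a ^ 2 - 1) ≤ s * (1 - b ^ 2) * (a ^ 2 - 2 * a) := by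
          linarith [mul_le_mul_of_nonneg_right hc h2]
        have h4 : s * (1 - b ^ 2) * (a ^ 2 - 2 * a) < s * (a ^ 2 - 1) * (2 * b - b ^ 2) := by
          linarith [mul_pos hspos key]
        have h6 := lt_of_le_of_lt h3 h4
        have h5 : t * (a ^ 2 - 2 * a) < s * (2 * b - b ^ 2) := by
          by_contra hcon
          push_neg at hcon
          linarith [mul_le_mul_of_nonneg_right hcon h1.le]
        linarith [h5]
end

section
/- Let a > b ≥ 1 be integers with Δ = b² − 4a² squarefree (so Δ < 0), and let F = ℚ(√Δ). Put f = (b + √Δ)/(2a) and I = ℤ + fℤ, a fractional O_F-ideal. Then both 1 and f are minimal elements of I, |σ(f)| = 1 for the complex embedding σ, f is not a unit of O_F, and consequently d(I) and d(f^{−1}I) are distinct reduced Arakelov divisors whose classes in Pic⁰_F coincide. -/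
open NumberField Module FractionalIdeal
open scoped nonZeroDivisors

/-!
Since `a f² - b f + a = 0`, the conjugate of `f` is `f⁻¹`, so `|σ f| = 1`, and
`a |σ (x + y f)|² = a x² + b x y + a y²`. For `|b| ≤ a` this binary form is at least `a` on
nonzero integer vectors, which gives minimality of `1` (and of `f`) once `I = ℤ + fℤ`.
That equality holds because `Δ` is squarefree and odd, so `𝓞 F = ℤ[(1 + √Δ)/2]`, and
`(1 + √Δ)/2 = a f - (b - 1)/2` preserves `ℤ + fℤ`.
The trace `b / a` of `f` is not an integer, so `f` is not integral; fractional ideals of the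
Dedekind domain `𝓞 F` form a group, so `f⁻¹ I = I` would make `f` a unit. Finally the product
formula gives `|N f| = 1`, so `f⁻¹ I` and `I` have the same norm.
-/

lemma Int.odd_of_squarefree_sq_sub_four_mul {b c : ℤ} (h : Squarefree (b ^ 2 - 4 * c)) :
    Odd b := by
  rcases Int.even_or_odd b with ⟨k, rfl⟩ | hodd
  · have := Int.isUnit_iff.mp (h 2 ⟨k ^ 2 - c, by ring⟩)
    omega
  · exact hodd

lemma Int.le_mul_sq_add_mul_mul_add_mul_sq {a b x y : ℤ} (hba : |b| ≤ a)
    (hxy : x ≠ 0 ∨ y ≠ 0) :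
    a ≤ a * x ^ 2 + b * x * y + a * y ^ 2 := by
  have hx : x ^ 2 = |x| ^ 2 := (sq_abs x).symm
  have hy : y ^ 2 = |y| ^ 2 := (sq_abs y).symm
  have hcross : -(a * (|x| * |y|)) ≤ b * x * y := by
    have : |b * x * y| ≤ a * (|x| * |y|) := by
      rw [abs_mul, abs_mul, mul_assoc]
      exact mul_le_mul_of_nonneg_right hba (by positivity)
    linarith [neg_abs_le (b * x * y)]
  have hform : 1 ≤ |x| ^ 2 - |x| * |y| + |y| ^ 2 := by
    rcases hxy with hx0 | hy0
    · have := Int.one_le_abs hx0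
      nlinarith [abs_nonneg y]
    · have := Int.one_le_abs hy0
      nlinarith [abs_nonneg x]
  nlinarith [(abs_nonneg b).trans hba]

lemma Rat.exists_int_eq_of_squarefree_mul_sq {D m : ℤ} (hD : Squarefree D) {r : ℚ}
    (h : D * r ^ 2 = m) : ∃ n : ℤ, r = n := by
  have hkey : D * r.num ^ 2 = (r.den : ℤ) ^ 2 * m := by
    rw [← Rat.num_div_den r] at h
    field_simp at h
    exact_mod_cast h
  have hden : (r.den : ℤ) ^ 2 ∣ D :=
    r.isCoprime_num_den.symm.pow.dvd_of_dvd_mul_right ⟨m, hkey⟩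
  have hden1 : r.den = 1 := by
    rcases Int.isUnit_iff.mp (hD _ (by rwa [← sq])) with h1 | h1 <;> omega
  exact ⟨r.num, by rw [← Rat.num_div_den r, hden1]; simp⟩

lemma Rat.exists_int_add_div_two_of_two_mul_eq {D p t : ℤ} (hsf : Squarefree D) (hodd : Odd D)
    {X Y : ℚ} (hp : 2 * X = p) (ht : 2 * (X ^ 2 + D * Y ^ 2) = t) :
    ∃ m n : ℤ, X = m + n / 2 ∧ Y = n / 2 := by
  obtain ⟨q, hq⟩ := Rat.exists_int_eq_of_squarefree_mul_sq (m := 2 * t - p ^ 2) hsf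
    (r := 2 * Y) (by push_cast; linear_combination 2 * ht - (p + 2 * X) * hp)
  have hnorm : p ^ 2 + D * q ^ 2 = 2 * t := by
    have : ((p ^ 2 + D * q ^ 2 : ℤ) : ℚ) = (2 * t : ℤ) := by
      push_cast
      linear_combination -(p + 2 * X) * hp - D * (q + 2 * Y) * hq + 2 * ht
    exact_mod_cast this
  obtain ⟨d, rfl⟩ := hodd
  obtain ⟨m, hm⟩ : Even (p - q) :=
    (Int.even_pow' two_ne_zero).mp ⟨t - d * q ^ 2 - p * q, by linear_combination hnorm⟩
  refine ⟨m, q, ?_, by linarith⟩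
  have : (p : ℚ) = m + m + q := by exact_mod_cast (by omega : p = m + m + q)
  linarith

lemma Rat.sq_ne_of_neg {D : ℤ} (hD : D < 0) (r : ℚ) : r ^ 2 ≠ D := by
  have : (D : ℚ) < 0 := by exact_mod_cast hD
  nlinarith [sq_nonneg r]

section QuadraticField

variable {F : Type*} [Field F] {D : ℤ} {s : F}

lemma ratCast_add_mul_sqrt_eq_zero [CharZero F] (hs : s ^ 2 = D) (hD : ∀ r : ℚ, r ^ 2 ≠ D)
    {X Y : ℚ} (h : (X : F) + Y * s = 0) : X = 0 ∧ Y = 0 := by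
  by_cases hY : Y = 0
  · subst hY
    simpa using h
  refine absurd ?_ (hD (X / Y))
  have hsX : s = ((-(X / Y) : ℚ) : F) := by
    push_cast
    field_simp
    linear_combination h
  exact_mod_cast (show (((X / Y) ^ 2 : ℚ) : F) = D by rw [← hs, hsX]; push_cast; ring)

lemma linearIndependent_one_sqrt [CharZero F] (hs : s ^ 2 = D) (hD : ∀ r : ℚ, r ^ 2 ≠ D) :
    LinearIndependent ℚ ![(1 : F), s] := by
  refine LinearIndependent.pair_iff.mpr fun X Y h ↦ ratCast_add_mul_sqrt_eq_zero hs hD ?_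
  simpa [Rat.smul_def] using h

lemma NumberField.InfinitePlace.apply_ratCast_add_mul_sqrt_sq (w : InfinitePlace F) (hs : s ^ 2 = D)
    (hD : D < 0) (X Y : ℚ) : w (X + Y * s) ^ 2 = X ^ 2 - D * Y ^ 2 := by
  have hz : w.embedding s ^ 2 = ((D : ℝ) : ℂ) := by
    rw [← map_pow, hs]; simp
  rw [← InfinitePlace.norm_embedding_eq, map_add, map_mul, map_ratCast, map_ratCast]
  generalize w.embedding s = z at hz ⊢
  have hre := congrArg Complex.re hz
  have him := congrArg Complex.im hz
  simp only [sq, Complex.mul_re, Complex.mul_im, Complex.ofReal_re, Complex.ofReal_im] at hre him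
  have hDR : (D : ℝ) < 0 := by exact_mod_cast hD
  have hz_re : z.re = 0 := mul_self_eq_zero.mp (by nlinarith)
  rw [hz_re] at hre
  rw [Complex.sq_norm, Complex.normSq_apply]
  simp only [Complex.add_re, Complex.add_im, Complex.mul_re, Complex.mul_im, Complex.ratCast_re,
    Complex.ratCast_im, hz_re, mul_zero, add_zero]
  linear_combination -(Y : ℝ) ^ 2 * hre

variable [NumberField F]

noncomputable def basisOneSqrt (hF : finrank ℚ F = 2) (hs : s ^ 2 = D)
    (hD : ∀ r : ℚ, r ^ 2 ≠ D) : Basis (Fin 2) ℚ F :=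
  basisOfLinearIndependentOfCardEqFinrank (linearIndependent_one_sqrt hs hD) (by simp [hF])

@[simp]
lemma basisOneSqrt_zero (hF : finrank ℚ F = 2) (hs : s ^ 2 = D) (hD : ∀ r : ℚ, r ^ 2 ≠ D) :
    basisOneSqrt hF hs hD 0 = 1 := by
  simp [basisOneSqrt]

@[simp]
lemma basisOneSqrt_one (hF : finrank ℚ F = 2) (hs : s ^ 2 = D) (hD : ∀ r : ℚ, r ^ 2 ≠ D) :
    basisOneSqrt hF hs hD 1 = s := by
  simp [basisOneSqrt]

lemma exists_eq_ratCast_add_mul_sqrt (hF : finrank ℚ F = 2) (hs : s ^ 2 = D)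
    (hD : ∀ r : ℚ, r ^ 2 ≠ D) (u : F) : ∃ X Y : ℚ, u = X + Y * s := by
  have h := (basisOneSqrt hF hs hD).sum_repr u
  rw [Fin.sum_univ_two, basisOneSqrt_zero, basisOneSqrt_one, Rat.smul_def, Rat.smul_def,
    mul_one] at h
  exact ⟨_, _, h.symm⟩

lemma trace_sqrt_eq_zero (hF : finrank ℚ F = 2) (hs : s ^ 2 = D) (hD : ∀ r : ℚ, r ^ 2 ≠ D) :
    Algebra.trace ℚ F s = 0 := by
  set B := basisOneSqrt hF hs hD
  have hss : s * s = ((D : ℚ) : F) := by rw [← sq, hs]; push_cast; rfl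
  have hrepr_s : B.repr s 0 = 0 := by
    rw [← basisOneSqrt_one hF hs hD, B.repr_self]; simp
  have hrepr_D : B.repr ((D : ℚ) : F) 1 = 0 := by
    rw [← mul_one ((D : ℚ) : F), ← Rat.smul_def, ← basisOneSqrt_zero hF hs hD, map_smul,
      B.repr_self]
    simp
  rw [Algebra.trace_eq_matrix_trace B, Matrix.trace_fin_two]
  simp only [Algebra.leftMulMatrix_eq_repr_mul, B, basisOneSqrt_zero, basisOneSqrt_one, mul_one,
    hss]
  rw [hrepr_s, hrepr_D, add_zero]

lemma trace_ratCast_add_mul_sqrt (hF : finrank ℚ F = 2) (hs : s ^ 2 = D)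
    (hD : ∀ r : ℚ, r ^ 2 ≠ D) (X Y : ℚ) : Algebra.trace ℚ F (X + Y * s) = 2 * X := by
  rw [← Rat.smul_def, ← eq_ratCast (algebraMap ℚ F), map_add, map_smul,
    trace_sqrt_eq_zero hF hs hD, Algebra.trace_algebraMap, hF]
  simp

lemma exists_int_eq_add_mul_half_one_add_sqrt (hF : finrank ℚ F = 2) (hs : s ^ 2 = D)
    (hD : ∀ r : ℚ, r ^ 2 ≠ D) (hsf : Squarefree D) (hodd : Odd D) (u : 𝓞 F) :
    ∃ m n : ℤ, (u : F) = m + n * ((1 + s) / 2) := by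
  obtain ⟨X, Y, hu⟩ := exists_eq_ratCast_add_mul_sqrt hF hs hD u
  have hu2 : (u : F) ^ 2 = ((X ^ 2 + D * Y ^ 2 : ℚ) : F) + ((2 * X * Y : ℚ) : F) * s := by
    rw [hu]; push_cast; linear_combination (Y : F) ^ 2 * hs
  have htrace (x : 𝓞 F) : Algebra.trace ℚ F x = (Algebra.trace ℤ (𝓞 F) x : ℤ) :=
    (Algebra.coe_trace_int x).symm
  have hp := htrace u
  have ht := htrace (u ^ 2)
  rw [hu, trace_ratCast_add_mul_sqrt hF hs hD] at hp
  push_cast at ht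
  rw [hu2, trace_ratCast_add_mul_sqrt hF hs hD] at ht
  obtain ⟨m, n, hX, hY⟩ := Rat.exists_int_add_div_two_of_two_mul_eq hsf hodd hp ht
  refine ⟨m, n, ?_⟩
  rw [hu, hX, hY]
  push_cast
  ring

end QuadraticField

lemma FractionalIdeal.exists_unit_eq_of_spanSingleton_mul_eq_self {R K : Type*} [CommRing R]
    [IsDedekindDomain R] [Field K] [Algebra R K] [IsFractionRing R K]
    {I : FractionalIdeal R⁰ K} (hI : I ≠ 0) {x : K} (h : spanSingleton R⁰ x * I = I) :
    ∃ u : Rˣ, algebraMap R K u = x := by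
  rw [mul_eq_right₀ hI, ← spanSingleton_one, spanSingleton_eq_spanSingleton] at h
  obtain ⟨u, hu⟩ := h
  exact ⟨u⁻¹, by rw [← inv_smul_smul u x, hu, Units.smul_def, Algebra.smul_def, mul_one]⟩

lemma NumberField.abs_norm_eq_one_of_forall_infinitePlace_eq_one {K : Type*} [Field K]
    [NumberField K] {x : K} (h : ∀ w : InfinitePlace K, w x = 1) : |Algebra.norm ℚ x| = 1 := by
  have : ((|Algebra.norm ℚ x| : ℚ) : ℝ) = 1 := by
    rw [← InfinitePlace.prod_eq_abs_norm]
    exact Finset.prod_eq_one fun w _ ↦ by rw [h w, one_pow]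
  exact_mod_cast this

namespace ReciprocalRoot

variable {F : Type*} [Field F] {a b : ℤ} {s f : F}

lemma two_mul_mul_eq_add [CharZero F] (ha : a ≠ 0) (hf : f = (b + s) / (2 * a)) :
    2 * a * f = b + s := by
  rw [hf]; field_simp

lemma mul_sq_sub_mul_add_eq_zero [CharZero F] (ha : a ≠ 0)
    (hs : s ^ 2 = ((b ^ 2 - 4 * a ^ 2 : ℤ) : F)) (hf : f = (b + s) / (2 * a)) :
    a * f ^ 2 - b * f + a = 0 := by
  have h := two_mul_mul_eq_add ha hf
  have ha' : (4 * a : F) ≠ 0 := by simpa using ha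
  refine (mul_eq_zero.mp ?_).resolve_left ha'
  push_cast at hs
  linear_combination (2 * a * f - b + s) * h + hs

lemma mul_apply_add_mul_sq [CharZero F] (w : InfinitePlace F) (ha : a ≠ 0)
    (hΔ : b ^ 2 - 4 * a ^ 2 < 0)
    (hs : s ^ 2 = ((b ^ 2 - 4 * a ^ 2 : ℤ) : F)) (hf : f = (b + s) / (2 * a)) (x y : ℤ) :
    a * w (x + y * f) ^ 2 = a * x ^ 2 + b * x * y + a * y ^ 2 := by
  have h2a : ((2 * a : ℤ) : F) * (x + y * f) =
      ((2 * a * x + b * y : ℤ) : ℚ) + ((y : ℤ) : ℚ) * s := by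
    push_cast
    linear_combination y * two_mul_mul_eq_add ha hf
  have h := InfinitePlace.apply_ratCast_add_mul_sqrt_sq w hs hΔ
    ((2 * a * x + b * y : ℤ) : ℚ) (y : ℚ)
  rw [← h2a, map_mul, InfinitePlace.map_intCast, Int.norm_eq_abs, mul_pow, sq_abs] at h
  have h4a : (4 * a : ℝ) ≠ 0 := by simpa using ha
  refine mul_left_cancel₀ h4a ?_
  push_cast at h
  linear_combination h

lemma apply_eq_one [CharZero F] (w : InfinitePlace F) (ha : a ≠ 0) (hΔ : b ^ 2 - 4 * a ^ 2 < 0)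
    (hs : s ^ 2 = ((b ^ 2 - 4 * a ^ 2 : ℤ) : F)) (hf : f = (b + s) / (2 * a)) : w f = 1 := by
  have h := mul_apply_add_mul_sq w ha hΔ hs hf 0 1
  simp only [Int.cast_zero, Int.cast_one, zero_add, one_mul] at h
  refine (pow_eq_one_iff_of_nonneg (apply_nonneg w f) two_ne_zero).mp
    (mul_left_cancel₀ (by exact_mod_cast ha : (a : ℝ) ≠ 0) ?_)
  linear_combination h

variable [NumberField F]

lemma exists_int_eq_add_mul_of_mem_one_add_spanSingleton (hF : finrank ℚ F = 2) (ha : a ≠ 0)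
    (hΔ : b ^ 2 - 4 * a ^ 2 < 0) (hsf : Squarefree (b ^ 2 - 4 * a ^ 2))
    (hs : s ^ 2 = ((b ^ 2 - 4 * a ^ 2 : ℤ) : F)) (hf : f = (b + s) / (2 * a)) {g : F}
    (hg : g ∈ 1 + spanSingleton (𝓞 F)⁰ f) : ∃ x y : ℤ, g = x + y * f := by
  obtain ⟨_, hu, _, hz, rfl⟩ := (mem_add _ _ _).mp hg
  obtain ⟨u, rfl⟩ := (mem_one_iff _).mp hu
  obtain ⟨z, rfl⟩ := (mem_spanSingleton _).mp hz
  obtain ⟨k, hk⟩ := Int.odd_of_squarefree_sq_sub_four_mul hsf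
  have hodd : Odd (b ^ 2 - 4 * a ^ 2) :=
    (hk ▸ odd_two_mul_add_one k).pow.sub_even ⟨2 * a ^ 2, by ring⟩
  have hcoords := exists_int_eq_add_mul_half_one_add_sqrt hF hs (Rat.sq_ne_of_neg hΔ) hsf hodd
  obtain ⟨m, n, hu⟩ := hcoords u
  obtain ⟨m', n', hz⟩ := hcoords z
  have hω : (1 + s) / 2 = a * f - k := by
    have hkF : (b : F) = 2 * k + 1 := by exact_mod_cast hk
    linear_combination -two_mul_mul_eq_add ha hf / 2 - hkF / 2
  refine ⟨m - n * k - n' * a, n * a + m' + n' * (b - k), ?_⟩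
  rw [Algebra.smul_def]
  push_cast
  linear_combination
    hu + f * hz + (n + n' * f) * hω + n' * mul_sq_sub_mul_add_eq_zero ha hs hf

lemma one_le_apply_of_mem (w : InfinitePlace F) (hF : finrank ℚ F = 2) (ha : 0 < a)
    (hba : |b| ≤ a) (hsf : Squarefree (b ^ 2 - 4 * a ^ 2))
    (hs : s ^ 2 = ((b ^ 2 - 4 * a ^ 2 : ℤ) : F)) (hf : f = (b + s) / (2 * a)) {g : F}
    (hg : g ∈ 1 + spanSingleton (𝓞 F)⁰ f) (hg0 : g ≠ 0) : 1 ≤ w g := by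
  have hΔ : b ^ 2 - 4 * a ^ 2 < 0 := by nlinarith [sq_abs b, abs_nonneg b]
  obtain ⟨x, y, rfl⟩ :=
    exists_int_eq_add_mul_of_mem_one_add_spanSingleton hF ha.ne' hΔ hsf hs hf hg
  have hxy : x ≠ 0 ∨ y ≠ 0 := by
    by_contra! h
    simp [h.1, h.2] at hg0
  have hQ : (a : ℝ) ≤ a * w (x + y * f) ^ 2 := by
    rw [mul_apply_add_mul_sq w ha.ne' hΔ hs hf]
    exact_mod_cast Int.le_mul_sq_add_mul_mul_add_mul_sq hba hxy
  rw [le_mul_iff_one_le_right (by exact_mod_cast ha)] at hQ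
  exact (one_le_pow_iff_of_nonneg (apply_nonneg w _) two_ne_zero).mp hQ

lemma trace_eq_div (hF : finrank ℚ F = 2) (ha : a ≠ 0) (hΔ : b ^ 2 - 4 * a ^ 2 < 0)
    (hs : s ^ 2 = ((b ^ 2 - 4 * a ^ 2 : ℤ) : F)) (hf : f = (b + s) / (2 * a)) :
    Algebra.trace ℚ F f = b / a := by
  have hf' : f = ((b / (2 * a) : ℚ) : F) + ((1 / (2 * a) : ℚ) : F) * s := by
    rw [hf]; push_cast; ring
  rw [hf', trace_ratCast_add_mul_sqrt hF hs (Rat.sq_ne_of_neg hΔ)]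
  field_simp

lemma not_isIntegral (hF : finrank ℚ F = 2) (hb : 0 < b) (hab : b < a)
    (hs : s ^ 2 = ((b ^ 2 - 4 * a ^ 2 : ℤ) : F)) (hf : f = (b + s) / (2 * a)) :
    ¬ IsIntegral ℤ f := by
  intro hint
  have ha : (a : ℚ) ≠ 0 := by exact_mod_cast (hb.trans hab).ne'
  have htr : (Algebra.trace ℤ (𝓞 F) ⟨f, hint⟩ : ℚ) = Algebra.trace ℚ F f :=
    Algebra.coe_trace_int _
  rw [trace_eq_div hF (by exact_mod_cast ha) (by nlinarith) hs hf,
    eq_div_iff ha] at htr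
  have : Algebra.trace ℤ (𝓞 F) ⟨f, hint⟩ * a = b := by exact_mod_cast htr
  have := Int.le_of_dvd hb ⟨_, this.symm.trans (mul_comm _ _)⟩
  omega

end ReciprocalRoot

/-- Example 9.3. Let `a > b ≥ 1` be integers with
`Δ = b² − 4a²` squarefree, `F = ℚ(√Δ)` the corresponding imaginary quadratic
field (a degree-2 number field containing a square root `s` of `Δ`), and put
`f = (b + s)/(2a)` and `I = O_F + f·O_F` (which equals `ℤ + fℤ`).  Then `1`
and `f` are minimal elements of `I`, `|σ(f)| = 1` at the unique infinite
place, `f` is not a unit of `O_F`, and consequently `d(I)` and `d(f⁻¹I)` are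
distinct reduced Arakelov divisors whose classes in `Pic⁰_F` coincide. -/
theorem example_9_3 (F : Type*) [Field F] [NumberField F]
    (hdeg : finrank ℚ F = 2)
    (a b : ℤ) (hb : 1 ≤ b) (hab : b < a)
    (hsf : Squarefree (b ^ 2 - 4 * a ^ 2))
    (s : F) (hs : s ^ 2 = ((b ^ 2 - 4 * a ^ 2 : ℤ) : F))
    (f : F) (hf : f = ((b : F) + s) / (2 * (a : F)))
    (I : FractionalIdeal (𝓞 F)⁰ F)
    (hI : I = 1 + spanSingleton (𝓞 F)⁰ f) :
    (∀ g : F, g ∈ I → (∀ w : InfinitePlace F, w g < 1) → g = 0) ∧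
      (∀ g : F, g ∈ I → (∀ w : InfinitePlace F, w g < w f) → g = 0) ∧
      (∀ w : InfinitePlace F, w f = 1) ∧
      (¬ ∃ u : (𝓞 F)ˣ, ((u : 𝓞 F) : F) = f) ∧
      spanSingleton (𝓞 F)⁰ f⁻¹ * I ≠ I ∧
      (∃ h : F, h ≠ 0 ∧
        spanSingleton (𝓞 F)⁰ f⁻¹ * I = spanSingleton (𝓞 F)⁰ h⁻¹ * I ∧
        ∀ w : InfinitePlace F,
          (absNorm (spanSingleton (𝓞 F)⁰ f⁻¹ * I) : ℝ) ^ (-(1 : ℝ) / 2) =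
            w h * (absNorm I : ℝ) ^ (-(1 : ℝ) / 2)) := by
  have ha : 0 < a := by omega
  have hΔ : b ^ 2 - 4 * a ^ 2 < 0 := by nlinarith
  have hwf (w : InfinitePlace F) : w f = 1 := ReciprocalRoot.apply_eq_one w ha.ne' hΔ hs hf
  have hmin (g : F) (hg : g ∈ I) (hw : ∀ w : InfinitePlace F, w g < 1) : g = 0 := by
    by_contra hg0
    obtain ⟨w⟩ := (inferInstance : Nonempty (InfinitePlace F))
    exact (hw w).not_ge <| ReciprocalRoot.one_le_apply_of_mem w hdeg ha
      (abs_le.mpr ⟨by omega, hab.le⟩) hsf hs hf (hI ▸ hg) hg0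
  have hnotunit : ¬ ∃ u : (𝓞 F)ˣ, ((u : 𝓞 F) : F) = f := fun ⟨u, hu⟩ ↦
    ReciprocalRoot.not_isIntegral hdeg (by omega) hab hs hf (hu ▸ RingOfIntegers.isIntegral_coe _)
  have hf0 : f ≠ 0 := fun h ↦ by simp [h] at hwf
  have hI0 : I ≠ 0 := by
    have h1I : (1 : F) ∈ I :=
      hI ▸ (mem_add _ _ _).mpr ⟨1, one_mem_one _, 0, zero_mem _, add_zero 1⟩
    exact fun h ↦ one_ne_zero ((mem_zero_iff _).mp (h ▸ h1I))
  have hnorm : absNorm (spanSingleton (𝓞 F)⁰ f⁻¹ * I) = absNorm I := by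
    rw [map_mul, absNorm_span_singleton,
      abs_norm_eq_one_of_forall_infinitePlace_eq_one (by simp [hwf]), one_mul]
  refine ⟨hmin, fun g hg hw ↦ hmin g hg (by simpa [hwf] using hw), hwf, hnotunit, fun h ↦ ?_,
    f, hf0, rfl, fun w ↦ by rw [hnorm, hwf, one_mul]⟩
  obtain ⟨u, hu⟩ := exists_unit_eq_of_spanSingleton_mul_eq_self hI0 h
  exact hnotunit ⟨u⁻¹, by simp [hu]⟩
end
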